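/- arXiv:2212.09838 — 2 statements merged into one kernel-verified Lean document; each statement's English description precedes it below -/
import Mathlib

section
/- For any real numbers $\mu > 0$ and $\chi > 0$, the infimum of the function $\beta \mapsto \mu \beta \big(1 + \frac{(\chi - \beta)^2}{4\beta}\big)$ over $\beta \in (0, \chi)$ equals $\frac{\mu \chi^2}{4}$ if $0 < \chi < 2$, and equals $\mu(\chi - 1)$ if $\chi \geq 2$. -/
/-!
For `β > 0` the function equals `μ ((β - (χ - 2))² + 4χ - 4) / 4`, a parabola with vertex
`χ - 2`. If `χ > 2` the vertex lies in `(0, χ)` and the minimum `μ (χ - 1)` is attained there.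
If `χ ≤ 2` the parabola increases on `[0, χ]`, so the infimum over `(0, χ)` is its value
`μ χ² / 4` at the excluded endpoint `0`.
-/

open Set

theorem MonotoneOn.csInf_image_Ioo {α β : Type*} [LinearOrder α] [TopologicalSpace α]
    [OrderTopology α] [DenselyOrdered α] [ConditionallyCompleteLinearOrder β]
    [TopologicalSpace β] [OrderTopology β] {f : α → β} {a b : α} (hab : a < b)
    (hmono : MonotoneOn f (Icc a b)) (hcont : ContinuousOn f (Icc a b)) :
    sInf (f '' Ioo a b) = f a := by
  refine (isGLB_of_mem_closure ?_ ?_).csInf_eq ((nonempty_Ioo.mpr hab).image f)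
  · rintro _ ⟨x, hx, rfl⟩
    exact hmono (left_mem_Icc.mpr hab.le) (Ioo_subset_Icc_self hx) hx.1.le
  · refine ((hcont a (left_mem_Icc.mpr hab.le)).mono Ioo_subset_Icc_self).mem_closure_image ?_
    rw [closure_Ioo hab.ne]
    exact left_mem_Icc.mpr hab.le

section

variable (μ χ : ℝ)

/-- The function of the statement with the pole at `β = 0` cleared. -/
noncomputable def clearedFun (β : ℝ) : ℝ := μ * (4 * β + (χ - β) ^ 2) / 4

theorem setOf_eq_image_clearedFun :
    {y : ℝ | ∃ β : ℝ, 0 < β ∧ β < χ ∧ y = μ * β * (1 + (χ - β) ^ 2 / (4 * β))} =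
      clearedFun μ χ '' Ioo 0 χ := by
  ext y
  constructor
  · rintro ⟨β, hβ0, hβχ, rfl⟩
    refine ⟨β, ⟨hβ0, hβχ⟩, ?_⟩
    simp only [clearedFun]
    field_simp
  · rintro ⟨β, ⟨hβ0, hβχ⟩, rfl⟩
    refine ⟨β, hβ0, hβχ, ?_⟩
    simp only [clearedFun]
    field_simp

theorem isLeast_clearedFun_image_Ioo {μ χ : ℝ} (hμ : 0 ≤ μ) (hχ : 2 < χ) :
    IsLeast (clearedFun μ χ '' Ioo 0 χ) (μ * (χ - 1)) := by
  refine ⟨⟨χ - 2, ⟨by linarith, by linarith⟩, by simp only [clearedFun]; ring⟩, ?_⟩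
  rintro _ ⟨β, -, rfl⟩
  have hsquare : clearedFun μ χ β = μ * (χ - 1) + μ * (β - (χ - 2)) ^ 2 / 4 := by
    simp only [clearedFun]; ring
  rw [hsquare]
  have : 0 ≤ μ * (β - (χ - 2)) ^ 2 / 4 := by positivity
  linarith

theorem monotoneOn_clearedFun {μ χ : ℝ} (hμ : 0 ≤ μ) (hχ : χ ≤ 2) :
    MonotoneOn (clearedFun μ χ) (Icc 0 χ) := by
  intro a ha b _ hab
  have hdiff :
      clearedFun μ χ b - clearedFun μ χ a = μ * (b - a) * (a + b + 4 - 2 * χ) / 4 := by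
    simp only [clearedFun]; ring
  have : 0 ≤ μ * (b - a) * (a + b + 4 - 2 * χ) / 4 := by
    have : 0 ≤ a + b + 4 - 2 * χ := by linarith [ha.1]
    have : 0 ≤ b - a := by linarith
    positivity
  linarith

end

/-- The infimum of `β ↦ μ β (1 + (χ-β)²/(4β))` over `β ∈ (0,χ)` equals `μχ²/4`
if `0 < χ < 2` and `μ(χ-1)` if `χ ≥ 2`. -/
theorem stmt0 (μ χ : ℝ) (hμ : 0 < μ) (hχ : 0 < χ) :
    sInf {y : ℝ | ∃ β : ℝ, 0 < β ∧ β < χ ∧ y = μ * β * (1 + (χ - β) ^ 2 / (4 * β))} =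
      if χ < 2 then μ * χ ^ 2 / 4 else μ * (χ - 1) := by
  rw [setOf_eq_image_clearedFun]
  rcases lt_or_ge 2 χ with hχ2 | hχ2
  · rw [if_neg (by linarith), (isLeast_clearedFun_image_Ioo hμ.le hχ2).csInf_eq]
  · have hcont : ContinuousOn (clearedFun μ χ) (Icc 0 χ) := by
      unfold clearedFun; fun_prop
    rw [MonotoneOn.csInf_image_Ioo hχ (monotoneOn_clearedFun hμ.le hχ2) hcont]
    have hvalue : clearedFun μ χ 0 = μ * χ ^ 2 / 4 := by simp only [clearedFun]; ring
    rcases hχ2.lt_or_eq with hlt | rfl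
    · rw [if_pos hlt, hvalue]
    · rw [if_neg (lt_irrefl 2), hvalue]; ring
end

section
/- If $\chi_1 = \chi_2 = \chi > 0$ and $\mu > 0$, then $\inf\{ \mu(B+\beta)\big(1 + \frac{(|\chi - B| - \beta)^2}{4\beta}\big) : B > 0,\ \beta > 0,\ \beta \neq |\chi - B| \} = \inf\{ \mu\beta\big(1 + \frac{(\chi - \beta)^2}{4\beta}\big) : 0 < \beta < \chi \}$. -/
/-!
With `c₂ B β` the two-parameter expression and `c₁ β` the one-parameter one, `c₁ β = c₂ 0 β`.
If `B + β < χ` then `c₁ (B + β) ≤ c₂ B β`, since enlarging the denominator `4β` to `4(B + β)` only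
lowers the fraction; if `B + β ≥ χ` then `c₂ B β ≥ μ (B + β) ≥ μ χ`, and `μ χ` already dominates
some `c₁ β'` with `β' ∈ (0, χ)`. Conversely, `c₁ β` is the limit of `c₂ B β` as `B → 0⁺`, and for
small `B > 0` the constraint `β ≠ |χ - B|` holds because `|χ - B|` is close to `χ > β`.
-/

open Filter Topology

section

variable (μ χ : ℝ)

noncomputable def twoParamCost (B β : ℝ) : ℝ :=
  μ * (B + β) * (1 + (|χ - B| - β) ^ 2 / (4 * β))

noncomputable def oneParamCost (β : ℝ) : ℝ :=
  μ * β * (1 + (χ - β) ^ 2 / (4 * β))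

variable {μ χ} {B β : ℝ}

lemma oneParamCost_eq (hβ : β ≠ 0) : oneParamCost μ χ β = μ * (β + (χ - β) ^ 2 / 4) := by
  unfold oneParamCost
  field_simp

lemma oneParamCost_nonneg (hμ : 0 ≤ μ) (hβ : 0 ≤ β) : 0 ≤ oneParamCost μ χ β := by
  unfold oneParamCost
  positivity

lemma mul_add_le_twoParamCost (hμ : 0 ≤ μ) (hB : 0 ≤ B) (hβ : 0 ≤ β) :
    μ * (B + β) ≤ twoParamCost μ χ B β := by
  unfold twoParamCost
  have : 0 ≤ (|χ - B| - β) ^ 2 / (4 * β) := by positivity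
  nlinarith [mul_nonneg hμ (add_nonneg hB hβ)]

lemma twoParamCost_zero (hχ : 0 ≤ χ) : twoParamCost μ χ 0 β = oneParamCost μ χ β := by
  simp [twoParamCost, oneParamCost, abs_of_nonneg hχ]

lemma continuous_twoParamCost : Continuous fun B => twoParamCost μ χ B β := by
  unfold twoParamCost
  fun_prop

lemma oneParamCost_add_le_twoParamCost (hμ : 0 ≤ μ) (hB : 0 < B) (hβ : 0 < β)
    (hBβ : B + β < χ) : oneParamCost μ χ (B + β) ≤ twoParamCost μ χ B β := by
  unfold oneParamCost twoParamCost
  rw [abs_of_pos (by linarith : 0 < χ - B), show χ - (B + β) = χ - B - β by ring]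
  have : (χ - B - β) ^ 2 / (4 * (B + β)) ≤ (χ - B - β) ^ 2 / (4 * β) :=
    div_le_div_of_nonneg_left (sq_nonneg _) (by positivity) (by linarith)
  gcongr

/-- Taking `β = χ - t` with `t = min (χ / 2) 4` gives `t ^ 2 / 4 ≤ t`. -/
lemma exists_oneParamCost_le_mul (hμ : 0 ≤ μ) (hχ : 0 < χ) :
    ∃ β, 0 < β ∧ β < χ ∧ oneParamCost μ χ β ≤ μ * χ := by
  set t := min (χ / 2) 4
  have ht₀ : 0 < t := lt_min (by linarith) (by norm_num)
  have htχ : t ≤ χ / 2 := min_le_left _ _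
  have ht₄ : t ≤ 4 := min_le_right _ _
  refine ⟨χ - t, by linarith, by linarith, ?_⟩
  rw [oneParamCost_eq (by linarith), sub_sub_cancel]
  have : t ^ 2 / 4 ≤ t := by nlinarith
  nlinarith

lemma exists_oneParamCost_le_twoParamCost (hμ : 0 ≤ μ) (hχ : 0 < χ) (hB : 0 < B) (hβ : 0 < β) :
    ∃ β', 0 < β' ∧ β' < χ ∧ oneParamCost μ χ β' ≤ twoParamCost μ χ B β := by
  by_cases hBβ : B + β < χ
  · exact ⟨B + β, by linarith, hBβ, oneParamCost_add_le_twoParamCost hμ hB hβ hBβ⟩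
  · obtain ⟨β', hβ'₀, hβ'χ, hle⟩ := exists_oneParamCost_le_mul hμ hχ
    refine ⟨β', hβ'₀, hβ'χ, hle.trans ?_⟩
    calc μ * χ ≤ μ * (B + β) := by gcongr; linarith
      _ ≤ twoParamCost μ χ B β := mul_add_le_twoParamCost hμ hB.le hβ.le

lemma tendsto_twoParamCost_nhdsGT_zero (hχ : 0 ≤ χ) :
    Tendsto (fun B => twoParamCost μ χ B β) (𝓝[>] 0) (𝓝 (oneParamCost μ χ β)) := by
  rw [← twoParamCost_zero hχ]
  exact continuous_twoParamCost.continuousAt.tendsto.mono_left nhdsWithin_le_nhds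

lemma eventually_pos_and_ne_abs_sub (hβχ : β < χ) :
    ∀ᶠ B in 𝓝[>] (0 : ℝ), 0 < B ∧ β ≠ |χ - B| := by
  filter_upwards [self_mem_nhdsWithin,
    nhdsWithin_le_nhds (Iio_mem_nhds (by linarith : (0 : ℝ) < χ - β))] with B hB hBχ
  have : β < χ - B := by linarith [hBχ.out]
  exact ⟨hB, (this.trans_le (le_abs_self _)).ne⟩

end

/-- In the equal-sensitivity case `χ₁ = χ₂ = χ`, the two-parameter infimum reduces to a
one-parameter infimum over `β ∈ (0,χ)`. -/
theorem stmt3 (μ χ : ℝ) (hμ : 0 < μ) (hχ : 0 < χ) :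
    sInf {y : ℝ | ∃ B β : ℝ, 0 < B ∧ 0 < β ∧ β ≠ |χ - B| ∧
        y = μ * (B + β) * (1 + (|χ - B| - β) ^ 2 / (4 * β))} =
      sInf {y : ℝ | ∃ β : ℝ, 0 < β ∧ β < χ ∧ y = μ * β * (1 + (χ - β) ^ 2 / (4 * β))} := by
  have hS_bdd : BddBelow {y : ℝ | ∃ B β : ℝ, 0 < B ∧ 0 < β ∧ β ≠ |χ - B| ∧
      y = twoParamCost μ χ B β} := by
    refine ⟨0, ?_⟩
    rintro _ ⟨B, β, hB, hβ, -, rfl⟩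
    exact (mul_nonneg hμ.le (by linarith)).trans (mul_add_le_twoParamCost hμ.le hB.le hβ.le)
  have hT_bdd : BddBelow {y : ℝ | ∃ β : ℝ, 0 < β ∧ β < χ ∧ y = oneParamCost μ χ β} := by
    refine ⟨0, ?_⟩
    rintro _ ⟨β, hβ, -, rfl⟩
    exact oneParamCost_nonneg hμ.le hβ.le
  apply le_antisymm
  · refine le_csInf ⟨_, χ / 2, by linarith, by linarith, rfl⟩ ?_
    rintro _ ⟨β, hβ, hβχ, rfl⟩
    refine ge_of_tendsto (tendsto_twoParamCost_nhdsGT_zero hχ.le) ?_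
    filter_upwards [eventually_pos_and_ne_abs_sub hβχ] with B ⟨hB, hne⟩
    exact csInf_le hS_bdd ⟨B, β, hB, hβ, hne, rfl⟩
  · refine le_csInf ⟨_, χ, 1, hχ, one_pos, by simp, rfl⟩ ?_
    rintro _ ⟨B, β, hB, hβ, -, rfl⟩
    obtain ⟨β', hβ'₀, hβ'χ, hle⟩ := exists_oneParamCost_le_twoParamCost hμ.le hχ hB hβ
    exact (csInf_le hT_bdd ⟨β', hβ'₀, hβ'χ, rfl⟩).trans hle
end
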